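/- arXiv:2510.18566 — 4 statements merged into one kernel-verified Lean document; each statement's English description precedes it below -/
import Mathlib

section
/- Let w ∈ ℝ^N be a probability vector, N_eff(w) = 1/∑ w_i², and q ∈ (0, 1/2). Then for any indices restricted to the first ⌊N_eff(w)⌋ coordinates, ∑_{i=1}^{⌊N_eff(w)⌋} i^{−q} w_i ≤ (1/√(1−2q)) · N_eff(w)^{−q}. -/
/-!
By Cauchy–Schwarz, `(∑_{i ≤ M} i^(-q) w_i)² ≤ (∑_{i ≤ M} i^(-2q)) · ∑_{i ≤ M} w_i²`. The first
factor is at most `M^(1-2q)/(1-2q)` (the partial sums of `i^(-p)` are dominated by the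
integral of `x^(-p)`, step by step via Bernoulli's inequality), the second at most
`S = ∑ w_i² = 1/N_eff`, and `M = ⌊1/S⌋` gives `M^(1-2q) · S ≤ S^(2q)`.
-/

open Finset Real

lemma one_sub_mul_rpow_neg_le_rpow_sub_rpow {p : ℝ} (hp0 : 0 ≤ p) (hp1 : p ≤ 1) {x : ℝ}
    (hx : 0 ≤ x) : (1 - p) * (x + 1) ^ (-p) ≤ (x + 1) ^ (1 - p) - x ^ (1 - p) := by
  have hy : 0 < x + 1 := by positivity
  have bernoulli := rpow_one_add_le_one_add_mul_self (s := -(x + 1)⁻¹)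
    (by linarith [inv_le_one_of_one_le₀ (by linarith : (1 : ℝ) ≤ x + 1)])
    (by linarith : 0 ≤ 1 - p) (by linarith : 1 - p ≤ 1)
  have hratio : 1 + -(x + 1)⁻¹ = x / (x + 1) := by field_simp; ring
  rw [hratio, div_rpow hx hy.le, div_le_iff₀ (by positivity)] at bernoulli
  have hneg : (x + 1) ^ (-p) = (x + 1) ^ (1 - p) / (x + 1) := by
    rw [← rpow_sub_one hy.ne']; ring_nf
  rw [hneg]
  calc (1 - p) * ((x + 1) ^ (1 - p) / (x + 1))
      = (x + 1) ^ (1 - p) - (1 + (1 - p) * -(x + 1)⁻¹) * (x + 1) ^ (1 - p) := by ring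
    _ ≤ (x + 1) ^ (1 - p) - x ^ (1 - p) := by linarith

lemma sum_Icc_rpow_neg_le {p : ℝ} (hp0 : 0 ≤ p) (hp1 : p < 1) (M : ℕ) :
    ∑ i ∈ Icc 1 M, (i : ℝ) ^ (-p) ≤ (M : ℝ) ^ (1 - p) / (1 - p) := by
  rw [le_div_iff₀ (by linarith), sum_mul]
  induction M with
  | zero => simp [zero_rpow (by linarith : 1 - p ≠ 0)]
  | succ M ih =>
    rw [sum_Icc_succ_top (by omega)]
    have step := one_sub_mul_rpow_neg_le_rpow_sub_rpow hp0 hp1.le (Nat.cast_nonneg M)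
    push_cast
    linarith

lemma sum_Icc_le_of_eq_zero {f : ℕ → ℝ} (hf : ∀ i, 0 ≤ f i) {N : ℕ}
    (hzero : ∀ i, N < i → f i = 0) (M : ℕ) : ∑ i ∈ Icc 1 M, f i ≤ ∑ i ∈ Icc 1 N, f i := by
  calc ∑ i ∈ Icc 1 M, f i ≤ ∑ i ∈ Icc 1 (max M N), f i :=
        sum_le_sum_of_subset_of_nonneg (Icc_subset_Icc_right (le_max_left M N))
          fun i _ _ => hf i
    _ = ∑ i ∈ Icc 1 N, f i := by
        refine (sum_subset (Icc_subset_Icc_right (le_max_right M N)) fun i hi hiN => ?_).symm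
        simp only [mem_Icc, not_and, not_le] at hi hiN
        exact hzero i (hiN hi.1)

lemma sq_sum_Icc_rpow_neg_mul_le {q : ℝ} (hq0 : 0 ≤ q) (hq : q < 1 / 2) (w : ℕ → ℝ) (M : ℕ) :
    (∑ i ∈ Icc 1 M, (i : ℝ) ^ (-q) * w i) ^ 2
      ≤ (M : ℝ) ^ (1 - 2 * q) / (1 - 2 * q) * ∑ i ∈ Icc 1 M, w i ^ 2 := by
  have hsq : ∀ i : ℕ, ((i : ℝ) ^ (-q)) ^ 2 = (i : ℝ) ^ (-(2 * q)) := fun i => by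
    rw [← rpow_natCast, ← rpow_mul (Nat.cast_nonneg i)]; ring_nf
  calc (∑ i ∈ Icc 1 M, (i : ℝ) ^ (-q) * w i) ^ 2
      ≤ (∑ i ∈ Icc 1 M, ((i : ℝ) ^ (-q)) ^ 2) * ∑ i ∈ Icc 1 M, w i ^ 2 :=
        sum_mul_sq_le_sq_mul_sq _ _ _
    _ ≤ (M : ℝ) ^ (1 - 2 * q) / (1 - 2 * q) * ∑ i ∈ Icc 1 M, w i ^ 2 := by
        simp only [hsq]
        gcongr
        exact sum_Icc_rpow_neg_le (by linarith) (by linarith) M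

lemma natCast_rpow_mul_le_rpow_one_sub {S : ℝ} (hS : 0 ≤ S) {M : ℕ} (hM : (M : ℝ) ≤ S⁻¹)
    {r : ℝ} (hr : 0 ≤ r) : (M : ℝ) ^ r * S ≤ S ^ (1 - r) := by
  rcases hS.eq_or_lt with rfl | hS
  · simpa using rpow_nonneg le_rfl (1 - r)
  calc (M : ℝ) ^ r * S ≤ S⁻¹ ^ r * S := by gcongr
    _ = S ^ (1 - r) := by rw [inv_rpow hS.le, rpow_sub hS, rpow_one]; field_simp

lemma sq_one_div_sqrt_mul_inv_rpow_neg {q S : ℝ} (hq : q < 1 / 2) (hS : 0 ≤ S) :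
    (1 / √(1 - 2 * q) * S⁻¹ ^ (-q)) ^ 2 = S ^ (2 * q) / (1 - 2 * q) := by
  rw [inv_rpow hS, rpow_neg (by positivity), inv_inv, mul_pow, div_pow, one_pow,
    sq_sqrt (by linarith), ← rpow_natCast, ← rpow_mul hS]
  push_cast; ring_nf

theorem stmt_3_general (N : ℕ) (w : ℕ → ℝ)
    (hzero : ∀ i, N < i → w i = 0)
    (q : ℝ) (hq0 : 0 < q) (hq : q < 1/2) :
    ∑ i ∈ Finset.Icc 1 (Nat.floor ((∑ i ∈ Finset.Icc 1 N, (w i) ^ 2)⁻¹)),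
        (i : ℝ) ^ (-q) * w i
      ≤ (1 / Real.sqrt (1 - 2*q)) * ((∑ i ∈ Finset.Icc 1 N, (w i) ^ 2)⁻¹) ^ (-q) := by
  set S := ∑ i ∈ Icc 1 N, w i ^ 2
  set M := ⌊S⁻¹⌋₊
  have h2q : 0 < 1 - 2 * q := by linarith
  have hS : 0 ≤ S := sum_nonneg fun i _ => sq_nonneg (w i)
  have hhead : ∑ i ∈ Icc 1 M, w i ^ 2 ≤ S :=
    sum_Icc_le_of_eq_zero (fun i => sq_nonneg (w i)) (fun i hi => by simp [hzero i hi]) M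
  have hM := natCast_rpow_mul_le_rpow_one_sub hS (Nat.floor_le (inv_nonneg.2 hS)) h2q.le
  refine le_of_sq_le_sq ?_ (by positivity)
  rw [sq_one_div_sqrt_mul_inv_rpow_neg hq hS]
  calc (∑ i ∈ Icc 1 M, (i : ℝ) ^ (-q) * w i) ^ 2
      ≤ (M : ℝ) ^ (1 - 2 * q) / (1 - 2 * q) * ∑ i ∈ Icc 1 M, w i ^ 2 :=
        sq_sum_Icc_rpow_neg_mul_le hq0.le hq w M
    _ ≤ (M : ℝ) ^ (1 - 2 * q) / (1 - 2 * q) * S := by gcongr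
    _ = (M : ℝ) ^ (1 - 2 * q) * S / (1 - 2 * q) := by ring
    _ ≤ S ^ (2 * q) / (1 - 2 * q) := by
        gcongr
        simpa using hM

/-- Head-sum bound: for a probability vector `w` (indexed by `1,…,N`) with effective
sample size `N_eff(w) = 1/∑ w_i²` and `q ∈ (0,1/2)`,
`∑_{i=1}^{⌊N_eff(w)⌋} i^(-q) w_i ≤ (1/√(1-2q)) · N_eff(w)^(-q)`. -/
theorem stmt_3 (N : ℕ) (hN : 0 < N) (w : ℕ → ℝ)
    (hnn : ∀ i, 0 ≤ w i) (hsum : ∑ i ∈ Finset.Icc 1 N, w i = 1)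
    (hzero : ∀ i, N < i → w i = 0)
    (q : ℝ) (hq0 : 0 < q) (hq : q < 1/2) :
    ∑ i ∈ Finset.Icc 1 (Nat.floor ((∑ i ∈ Finset.Icc 1 N, (w i) ^ 2)⁻¹)),
        (i : ℝ) ^ (-q) * w i
      ≤ (1 / Real.sqrt (1 - 2*q)) * ((∑ i ∈ Finset.Icc 1 N, (w i) ^ 2)⁻¹) ^ (-q) :=
  stmt_3_general N w hzero q hq0 hq
end

section
/- Suppose there is a constant c_0 > 0 and q ∈ (0,1) such that E[W_p^p((1/k)∑_{i=1}^k δ_{X_i}, P)] ≤ c_0 k^{−q} for every k ≥ 1, where X_1, X_2, ... are i.i.d. with law P. Then for any probability weights w_1 ≥ ... ≥ w_N ≥ 0 summing to 1, E[W_p^p(∑_{i=1}^N w_i δ_{X_i}, P)] ≤ c_0 ∑_{i=1}^N i^{−q} w_i. -/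
open MeasureTheory ENNReal

noncomputable section

/-- The set of couplings of two measures. -/
def Couplings {E : Type*} [MeasurableSpace E] (μ ν : Measure E) : Set (Measure (E × E)) :=
  {γ | γ.map Prod.fst = μ ∧ γ.map Prod.snd = ν}

/-- The optimal transport cost with cost `dist^p` (this is `W_p^p`). -/
def transportCost {E : Type*} [MeasurableSpace E] [PseudoMetricSpace E]
    (p : ℝ) (μ ν : Measure E) : ℝ≥0∞ :=
  ⨅ γ ∈ Couplings μ ν, ∫⁻ x, (edist x.1 x.2) ^ p ∂γ


/-!
Extend the weights by `wₖ = 0` for `k ≥ N`. Summation by parts writes the weighted empirical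
measure as the mixture `∑ₖ (k+1)(wₖ - wₖ₊₁) • (uniform empirical measure of X₀, …, Xₖ)`, whose
coefficients are nonnegative because the weights decrease, and sum to `∑ wᵢ = 1`. Convexity of
`μ ↦ W_p^p(μ, P)` bounds the cost of the mixture by the mixture of the costs, and the hypothesis
turns its expectation into `c₀ ∑ₖ (wₖ - wₖ₊₁)(k+1)^{1-q}`. Since
`(k+1)^{1-q} = (k+1)(k+1)^{-q} ≤ ∑_{i ≤ k} (i+1)^{-q}`, summing by parts back gives the claim.

Expectation is additive only on measurable functions, so we also need measurability of
`x ↦ W_p^p((1/m) ∑ δ_{xᵢ}, P)`. Disintegrating a coupling along its first marginal shows that this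
is the infimum, over families of probability measures `μᵢ` with `(1/m) ∑ μᵢ = P`, of
`(1/m) ∑ ∫ d(xᵢ, v)^p dμᵢ(v)`; each of these is upper semicontinuous in `x` by dominated
convergence, hence so is their infimum.
-/

open Finset Filter

section Convexity

variable {E : Type*} [MeasurableSpace E] [PseudoMetricSpace E]

lemma transportCost_zero_zero (p : ℝ) : transportCost p (0 : Measure E) 0 = 0 :=
  nonpos_iff_eq_zero.mp <| (iInf₂_le 0 (by simp [Couplings])).trans_eq (by simp)

lemma transportCost_add_le (p : ℝ) (ν₁ ν₂ P₁ P₂ : Measure E) :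
    transportCost p (ν₁ + ν₂) (P₁ + P₂) ≤ transportCost p ν₁ P₁ + transportCost p ν₂ P₂ := by
  refine le_iInf_add_iInf fun γ₁ γ₂ => le_iInf_add_iInf fun hγ₁ hγ₂ => ?_
  refine (iInf₂_le (γ₁ + γ₂) ?_).trans_eq (lintegral_add_measure _ _ _)
  exact ⟨by rw [Measure.map_add _ _ measurable_fst, hγ₁.1, hγ₂.1],
    by rw [Measure.map_add _ _ measurable_snd, hγ₁.2, hγ₂.2]⟩

lemma transportCost_smul_le (p : ℝ) {c : ℝ≥0∞} (hc : c ≠ ∞) (ν P : Measure E) :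
    transportCost p (c • ν) (c • P) ≤ c * transportCost p ν P := by
  rcases eq_or_ne c 0 with rfl | hc₀
  · simp [transportCost_zero_zero]
  simp only [transportCost, mul_iInf_of_ne hc₀ hc]
  refine le_iInf₂ fun γ hγ => (iInf₂_le (c • γ) ?_).trans_eq (lintegral_smul_measure _ _)
  exact ⟨by rw [Measure.map_smul, hγ.1], by rw [Measure.map_smul, hγ.2]⟩

lemma transportCost_sum_smul_le {ι : Type*} (p : ℝ) (s : Finset ι) {l : ι → ℝ≥0∞}
    (hl : ∀ k ∈ s, l k ≠ ∞) (ν P : ι → Measure E) :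
    transportCost p (∑ k ∈ s, l k • ν k) (∑ k ∈ s, l k • P k)
      ≤ ∑ k ∈ s, l k * transportCost p (ν k) (P k) := by
  classical
  induction s using Finset.induction_on with
  | empty => simp [transportCost_zero_zero]
  | insert a s ha ih =>
    simp only [sum_insert ha]
    refine (transportCost_add_le _ _ _ _ _).trans (add_le_add ?_ ?_)
    · exact transportCost_smul_le p (hl a (mem_insert_self a s)) _ _
    · exact ih fun k hk => hl k (mem_insert_of_mem hk)

end Convexity

section Empirical

variable {E : Type*} [MeasurableSpace E]

def empiricalMeasure (m : ℕ) (x : ℕ → E) : Measure E :=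
  ∑ i ∈ range m, (m : ℝ≥0∞)⁻¹ • Measure.dirac (x i)

lemma empiricalMeasure_univ_le_one (m : ℕ) (x : ℕ → E) : empiricalMeasure m x Set.univ ≤ 1 := by
  simp only [empiricalMeasure, Measure.coe_finsetSum, Finset.sum_apply, Measure.smul_apply,
    measure_univ, smul_eq_mul, mul_one, sum_const, card_range, nsmul_eq_mul]
  exact ENNReal.mul_inv_le_one _

instance (m : ℕ) (x : ℕ → E) : IsFiniteMeasure (empiricalMeasure m x) :=
  ⟨(empiricalMeasure_univ_le_one m x).trans_lt one_lt_top⟩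

lemma lintegral_empiricalMeasure [MeasurableSingletonClass E] (m : ℕ) (x : ℕ → E) (f : E → ℝ≥0∞) :
    ∫⁻ a, f a ∂empiricalMeasure m x = ∑ i ∈ range m, (m : ℝ≥0∞)⁻¹ * f (x i) := by
  simp [empiricalMeasure, lintegral_smul_measure]

end Empirical

section Labelled

variable {E : Type*} [MeasurableSpace E] [PseudoMetricSpace E]

/-- Transport cost from the empirical measure of `x` with its atoms labelled: the `i`-th atom sends
its mass `1/m` according to `μ i`, so that repeated points `x i = x j` may be split differently. -/
def labelledTransportCost (p : ℝ) (P : Measure E) (m : ℕ) (x : ℕ → E) : ℝ≥0∞ :=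
  ⨅ (μ : ℕ → Measure E) (_ : ∀ i, IsProbabilityMeasure (μ i))
    (_ : ∑ i ∈ range m, (m : ℝ≥0∞)⁻¹ • μ i = P),
    ∑ i ∈ range m, (m : ℝ≥0∞)⁻¹ * ∫⁻ v, edist (x i) v ^ p ∂μ i

variable [SecondCountableTopology E] [BorelSpace E]

lemma measurable_edist_rpow (p : ℝ) : Measurable fun z : E × E => edist z.1 z.2 ^ p :=
  ENNReal.continuous_rpow_const.measurable.comp measurable_edist

lemma transportCost_empiricalMeasure_le (p : ℝ) (P : Measure E) (m : ℕ) (x : ℕ → E) :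
    transportCost p (empiricalMeasure m x) P ≤ labelledTransportCost p P m x := by
  refine le_iInf₂ fun μ hμ => le_iInf fun hP => ?_
  let γ := ∑ i ∈ range m, (m : ℝ≥0∞)⁻¹ • (Measure.dirac (x i)).prod (μ i)
  have hfst : γ.map Prod.fst = empiricalMeasure m x := by
    simp [γ, Measure.map_finset_sum measurable_fst.aemeasurable, Measure.map_smul,
      Measure.map_fst_prod, empiricalMeasure]
  have hsnd : γ.map Prod.snd = P := by
    simp [γ, Measure.map_finset_sum measurable_snd.aemeasurable, Measure.map_smul,
      Measure.map_snd_prod, hP]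
  refine (iInf₂_le γ ⟨hfst, hsnd⟩).trans_eq ?_
  simp [γ, lintegral_finsetSum_measure, lintegral_smul_measure, Measure.dirac_prod,
    lintegral_map (measurable_edist_rpow p) measurable_prodMk_left]

lemma upperSemicontinuous_lintegral_edist_rpow {p : ℝ} (hp : 1 ≤ p) (μ : Measure E)
    [IsFiniteMeasure μ] : UpperSemicontinuous fun u => ∫⁻ v, edist u v ^ p ∂μ := by
  intro u₀
  by_cases h : ∫⁻ v, edist u₀ v ^ p ∂μ = ∞
  · intro y hy
    exact absurd hy (by simp [h])
  refine ContinuousAt.upperSemicontinuousAt ?_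
  refine tendsto_lintegral_filter_of_dominated_convergence
    (fun v => 2 ^ (p - 1) * (1 + edist u₀ v ^ p)) ?_ ?_ ?_ ?_
  · exact Eventually.of_forall fun u => (measurable_edist_rpow p).comp measurable_prodMk_left
  · filter_upwards [Metric.eball_mem_nhds u₀ one_pos] with u hu
    refine Eventually.of_forall fun v => ?_
    calc edist u v ^ p ≤ (edist u u₀ + edist u₀ v) ^ p :=
          ENNReal.rpow_le_rpow (edist_triangle _ _ _) (by linarith)
      _ ≤ 2 ^ (p - 1) * (edist u u₀ ^ p + edist u₀ v ^ p) :=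
          ENNReal.rpow_add_le_mul_rpow_add_rpow _ _ hp
      _ ≤ 2 ^ (p - 1) * (1 + edist u₀ v ^ p) := by
          gcongr
          exact ENNReal.rpow_le_one (Metric.mem_eball.mp hu).le (by linarith)
  · rw [lintegral_const_mul' _ _ (by simp [ENNReal.rpow_eq_top_iff]),
      lintegral_add_left measurable_const]
    simp [ENNReal.mul_eq_top, h, ENNReal.rpow_eq_top_iff]
  · exact Eventually.of_forall fun v =>
      (ENNReal.continuous_rpow_const.tendsto _).comp
        (continuous_id.edist continuous_const).continuousAt

lemma upperSemicontinuous_labelledTransportCost {p : ℝ} (hp : 1 ≤ p) (P : Measure E) (m : ℕ) :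
    UpperSemicontinuous (labelledTransportCost p P m) := by
  refine upperSemicontinuous_iInf fun μ => upperSemicontinuous_iInf fun hμ =>
    upperSemicontinuous_iInf fun _ => upperSemicontinuous_sum fun i hi => ?_
  have hm : (m : ℝ≥0∞)⁻¹ ≠ ∞ := by simpa using (List.mem_range.mp hi).ne_bot
  exact (ENNReal.continuous_const_mul hm).comp_upperSemicontinuous
    ((upperSemicontinuous_lintegral_edist_rpow hp (μ i)).comp (continuous_apply i))
    fun _ _ h => mul_le_mul_right h _

end Labelled

section Polish

variable {E : Type*} [MeasurableSpace E] [MetricSpace E] [CompleteSpace E]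
  [SecondCountableTopology E] [BorelSpace E]

lemma labelledTransportCost_le_transportCost (p : ℝ) (P : Measure E) (m : ℕ)
    (x : ℕ → E) : labelledTransportCost p P m x ≤ transportCost p (empiricalMeasure m x) P := by
  have : Nonempty E := ⟨x 0⟩
  refine le_iInf₂ fun γ hγ => ?_
  have : IsFiniteMeasure (γ.map Prod.fst) := hγ.1 ▸ inferInstance
  have : IsFiniteMeasure γ := Measure.isFiniteMeasure_of_map measurable_fst.aemeasurable
  -- after disintegrating `γ`, the `i`-th atom is sent along `κ (x i)`
  obtain ⟨κ, hκ, rfl⟩ : ∃ κ : ProbabilityTheory.Kernel E E, ProbabilityTheory.IsMarkovKernel κ ∧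
      (empiricalMeasure m x).compProd κ = γ :=
    ⟨γ.condKernel, inferInstance, by rw [← hγ.1]; exact γ.disintegrate _⟩
  refine iInf_le_of_le (fun i => κ (x i)) <| iInf_le_of_le (fun _ => inferInstance) <|
    iInf_le_of_le ?_ ?_
  · rw [← hγ.2]
    ext s hs
    rw [Measure.map_apply measurable_snd hs, Measure.compProd_apply (measurable_snd hs),
      lintegral_empiricalMeasure]
    simp [Set.preimage_preimage]
  · rw [Measure.lintegral_compProd (measurable_edist_rpow p), lintegral_empiricalMeasure]

lemma measurable_transportCost_empiricalMeasure {p : ℝ} (hp : 1 ≤ p)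
    (P : Measure E) (m : ℕ) :
    Measurable fun x : ℕ → E => transportCost p (empiricalMeasure m x) P := by
  simp_rw [le_antisymm (transportCost_empiricalMeasure_le p P m _)
    (labelledTransportCost_le_transportCost p P m _)]
  exact (upperSemicontinuous_labelledTransportCost hp P m).measurable

end Polish

section Weights

lemma sum_range_smul_sum_range_succ {R M : Type*} [Semiring R] [AddCommMonoid M] [Module R M]
    (d : ℕ → R) (f : ℕ → M) (N : ℕ) :
    ∑ k ∈ range N, d k • ∑ i ∈ range (k + 1), f i = ∑ i ∈ range N, (∑ k ∈ Ico i N, d k) • f i := by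
  simp_rw [smul_sum, sum_smul]
  exact sum_comm' fun k i => by simp only [mem_range, mem_Ico]; omega

lemma sum_Ico_sub_succ {v : ℕ → ℝ} {i N : ℕ} (hvN : v N = 0) (hi : i ≤ N) :
    ∑ k ∈ Ico i N, (v k - v (k + 1)) = v i := by
  have := Finset.sum_Ico_sub (fun k => -v k) hi
  simp only [neg_sub_neg, hvN, neg_zero, zero_sub, neg_neg] at this
  exact this

lemma antitone_ite_lt {w : ℕ → ℝ} {N : ℕ} (hw_nn : ∀ i, 0 ≤ w i)
    (hw_mono : ∀ i, i + 1 < N → w (i + 1) ≤ w i) : Antitone fun k => if k < N then w k else 0 :=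
  antitone_nat_of_succ_le fun k => by
    by_cases hk : k + 1 < N
    · simpa [hk, k.lt_succ_self.trans hk] using hw_mono k hk
    · simp only [if_neg hk]
      split_ifs <;> simp [hw_nn]

variable {v : ℕ → ℝ} {N : ℕ}

lemma sum_sub_mul_sum_range_succ (hvN : v N = 0) (f : ℕ → ℝ) :
    ∑ k ∈ range N, (v k - v (k + 1)) * ∑ i ∈ range (k + 1), f i = ∑ i ∈ range N, v i * f i := by
  simp_rw [← smul_eq_mul, sum_range_smul_sum_range_succ]
  exact sum_congr rfl fun i hi => by rw [sum_Ico_sub_succ hvN (mem_range.mp hi).le]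

lemma sum_succ_mul_sub (hvN : v N = 0) :
    ∑ k ∈ range N, ((k : ℝ) + 1) * (v k - v (k + 1)) = ∑ i ∈ range N, v i := by
  simpa [mul_comm] using sum_sub_mul_sum_range_succ hvN fun _ => (1 : ℝ)

lemma succ_mul_rpow_neg_le_sum {q : ℝ} (hq : 0 ≤ q) (k : ℕ) :
    ((k : ℝ) + 1) * ((k : ℝ) + 1) ^ (-q) ≤ ∑ i ∈ range (k + 1), ((i : ℝ) + 1) ^ (-q) := by
  calc ((k : ℝ) + 1) * ((k : ℝ) + 1) ^ (-q) = ∑ _i ∈ range (k + 1), ((k : ℝ) + 1) ^ (-q) := by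
        simp
    _ ≤ _ := sum_le_sum fun i hi => Real.rpow_le_rpow_of_nonpos (by positivity)
        (by simpa using (mem_range.mp hi)) (by linarith)

lemma sum_succ_mul_sub_mul_rpow_neg_le (hv : Antitone v) (hvN : v N = 0) {q : ℝ} (hq : 0 ≤ q) :
    ∑ k ∈ range N, ((k : ℝ) + 1) * (v k - v (k + 1)) * ((k : ℝ) + 1) ^ (-q)
      ≤ ∑ i ∈ range N, v i * ((i : ℝ) + 1) ^ (-q) := by
  rw [← sum_sub_mul_sum_range_succ hvN]
  refine sum_le_sum fun k _ => ?_
  rw [mul_comm _ (v k - _), mul_assoc]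
  exact mul_le_mul_of_nonneg_left (succ_mul_rpow_neg_le_sum hq k)
    (sub_nonneg.mpr (hv k.le_succ))

end Weights

section Mixture

variable {v : ℕ → ℝ} {N : ℕ}

lemma sum_ofReal_smul_dirac_eq_sum_smul_empiricalMeasure {E : Type*} [MeasurableSpace E]
    (hv : Antitone v) (hvN : v N = 0) (x : ℕ → E) :
    ∑ i ∈ range N, ENNReal.ofReal (v i) • Measure.dirac (x i)
      = ∑ k ∈ range N, ENNReal.ofReal (((k : ℝ) + 1) * (v k - v (k + 1)))
          • empiricalMeasure (k + 1) x := by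
  have hd : ∀ k, 0 ≤ v k - v (k + 1) := fun k => sub_nonneg.mpr (hv k.le_succ)
  have hterm : ∀ k : ℕ,
      ENNReal.ofReal (((k : ℝ) + 1) * (v k - v (k + 1))) • empiricalMeasure (k + 1) x
        = ENNReal.ofReal (v k - v (k + 1)) • ∑ i ∈ range (k + 1), Measure.dirac (x i) := by
    intro k
    rw [empiricalMeasure, smul_sum, smul_sum]
    refine sum_congr rfl fun i _ => ?_
    have hk : ENNReal.ofReal ((k : ℝ) + 1) = ((k + 1 : ℕ) : ℝ≥0∞) := by
      exact_mod_cast ENNReal.ofReal_natCast (k + 1)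
    rw [smul_smul, ENNReal.ofReal_mul (by positivity), mul_right_comm, hk,
      ENNReal.mul_inv_cancel (by simp) (by simp), one_mul]
  simp_rw [hterm, sum_range_smul_sum_range_succ]
  refine sum_congr rfl fun i hi => ?_
  rw [← ENNReal.ofReal_sum_of_nonneg fun k _ => hd k, sum_Ico_sub_succ hvN (mem_range.mp hi).le]

lemma transportCost_sum_ofReal_smul_dirac_le {E : Type*} [MeasurableSpace E] [PseudoMetricSpace E]
    (p : ℝ) (hv : Antitone v) (hvN : v N = 0) (hv_sum : ∑ i ∈ range N, v i = 1) (x : ℕ → E)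
    (P : Measure E) :
    transportCost p (∑ i ∈ range N, ENNReal.ofReal (v i) • Measure.dirac (x i)) P
      ≤ ∑ k ∈ range N, ENNReal.ofReal (((k : ℝ) + 1) * (v k - v (k + 1)))
          * transportCost p (empiricalMeasure (k + 1) x) P := by
  have hl : ∑ k ∈ range N, ENNReal.ofReal (((k : ℝ) + 1) * (v k - v (k + 1))) = 1 := by
    rw [← ENNReal.ofReal_sum_of_nonneg fun k _ =>
      mul_nonneg (by positivity) (sub_nonneg.mpr (hv k.le_succ)),
      sum_succ_mul_sub hvN, hv_sum, ENNReal.ofReal_one]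
  have hP : ∑ k ∈ range N, ENNReal.ofReal (((k : ℝ) + 1) * (v k - v (k + 1))) • P = P := by
    rw [← sum_smul, hl, one_smul]
  rw [sum_ofReal_smul_dirac_eq_sum_smul_empiricalMeasure hv hvN]
  conv_lhs => rw [← hP]
  exact transportCost_sum_smul_le p _ (fun _ _ => ENNReal.ofReal_ne_top) _ _

lemma sum_ofReal_mul_ofReal_rpow_neg_le (hv : Antitone v) (hvN : v N = 0) {q c : ℝ} (hq : 0 ≤ q)
    (hc : 0 ≤ c) :
    ∑ k ∈ range N, ENNReal.ofReal (((k : ℝ) + 1) * (v k - v (k + 1)))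
        * ENNReal.ofReal (c * ((k : ℝ) + 1) ^ (-q))
      ≤ ENNReal.ofReal (c * ∑ i ∈ range N, ((i : ℝ) + 1) ^ (-q) * v i) := by
  have ha : ∀ k : ℕ, 0 ≤ ((k : ℝ) + 1) * (v k - v (k + 1)) := fun k =>
    mul_nonneg (by positivity) (sub_nonneg.mpr (hv k.le_succ))
  rw [sum_congr rfl fun k _ => (ENNReal.ofReal_mul (ha k)).symm,
    ← ENNReal.ofReal_sum_of_nonneg fun k _ => mul_nonneg (ha k) (by positivity)]
  refine ENNReal.ofReal_le_ofReal ?_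
  simp_rw [mul_left_comm _ c, ← mul_sum, mul_comm _ (v _)]
  exact mul_le_mul_of_nonneg_left (sum_succ_mul_sub_mul_rpow_neg_le hv hvN hq) hc

end Mixture

/-- Indices are 0-based: `X i` is the `(i+1)`-st sample and `w i` its weight. -/
theorem stmt_7_general {E : Type*} [MeasurableSpace E] [MetricSpace E] [CompleteSpace E]
    [SecondCountableTopology E] [BorelSpace E]
    {Ω : Type*} [MeasurableSpace Ω] (μ : Measure Ω)
    (P : Measure E)
    (X : ℕ → Ω → E) (hXmeas : ∀ i, Measurable (X i))
    (c₀ q p : ℝ) (hc₀ : 0 < c₀) (hq0 : 0 < q) (hp : 1 ≤ p)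
    (hmoment : ∀ k : ℕ, 1 ≤ k →
      ∫⁻ ω, transportCost p
          (∑ i ∈ Finset.range k, ((k : ℝ≥0∞))⁻¹ • Measure.dirac (X i ω)) P ∂μ
        ≤ ENNReal.ofReal (c₀ * (k : ℝ) ^ (-q)))
    (N : ℕ) (w : ℕ → ℝ)
    (hw_nn : ∀ i, 0 ≤ w i)
    (hw_mono : ∀ i, i + 1 < N → w (i + 1) ≤ w i)
    (hw_sum : ∑ i ∈ Finset.range N, w i = 1) :
    ∫⁻ ω, transportCost p
        (∑ i ∈ Finset.range N, ENNReal.ofReal (w i) • Measure.dirac (X i ω)) P ∂μ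
      ≤ ENNReal.ofReal (c₀ * ∑ i ∈ Finset.range N, ((i : ℝ) + 1) ^ (-q) * w i) := by
  set v : ℕ → ℝ := fun k => if k < N then w k else 0
  have hvw : ∀ i ∈ range N, v i = w i := fun i hi => if_pos (mem_range.mp hi)
  have hvN : v N = 0 := if_neg (lt_irrefl N)
  have hv : Antitone v := antitone_ite_lt hw_nn hw_mono
  have hv_sum : ∑ i ∈ range N, v i = 1 := by rw [sum_congr rfl hvw, hw_sum]
  set l : ℕ → ℝ≥0∞ := fun k => ENNReal.ofReal (((k : ℝ) + 1) * (v k - v (k + 1)))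
  have hmeas : ∀ k, Measurable fun ω => transportCost p (empiricalMeasure (k + 1) (X · ω)) P :=
    fun k => (measurable_transportCost_empiricalMeasure hp P (k + 1)).comp
      (measurable_pi_lambda _ hXmeas)
  have hvw' : ∀ ω, ∑ i ∈ range N, ENNReal.ofReal (w i) • Measure.dirac (X i ω)
      = ∑ i ∈ range N, ENNReal.ofReal (v i) • Measure.dirac (X i ω) :=
    fun ω => sum_congr rfl fun i hi => by rw [hvw i hi]
  calc _ ≤ ∫⁻ ω, ∑ k ∈ range N, l k * transportCost p (empiricalMeasure (k + 1) (X · ω)) P ∂μ :=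
        lintegral_mono fun ω => by
          rw [hvw']
          exact transportCost_sum_ofReal_smul_dirac_le p hv hvN hv_sum _ P
    _ = ∑ k ∈ range N, l k * ∫⁻ ω, transportCost p (empiricalMeasure (k + 1) (X · ω)) P ∂μ := by
        rw [lintegral_finsetSum _ fun k _ => (hmeas k).const_mul _]
        exact sum_congr rfl fun k _ => lintegral_const_mul _ (hmeas k)
    _ ≤ ∑ k ∈ range N, l k * ENNReal.ofReal (c₀ * ((k : ℝ) + 1) ^ (-q)) := by
        gcongr with k
        exact_mod_cast hmoment (k + 1) k.succ_pos
    _ ≤ ENNReal.ofReal (c₀ * ∑ i ∈ range N, ((i : ℝ) + 1) ^ (-q) * v i) :=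
        sum_ofReal_mul_ofReal_rpow_neg_le hv hvN hq0.le hc₀.le
    _ = _ := by rw [sum_congr rfl fun i hi => by rw [hvw i hi]]

/-- If `E[W_p^p((1/k)∑_{i=1}^k δ_{X_i}, P)] ≤ c₀ k^(-q)` for all `k ≥ 1`, with
`X_1, X_2, …` i.i.d. with law `P`, then for nonincreasing probability weights
`w_1 ≥ … ≥ w_N`, `E[W_p^p(∑_i w_i δ_{X_i}, P)] ≤ c₀ ∑_i i^(-q) w_i`.
(Indices are 0-based: `X i` is the `(i+1)`-st sample and `w i` its weight.) -/
theorem stmt_7 {E : Type*} [MeasurableSpace E] [MetricSpace E] [CompleteSpace E]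
    [SecondCountableTopology E] [BorelSpace E]
    {Ω : Type*} [MeasurableSpace Ω] (μ : Measure Ω) [IsProbabilityMeasure μ]
    (P : Measure E) [IsProbabilityMeasure P]
    (X : ℕ → Ω → E) (hXmeas : ∀ i, Measurable (X i))
    (hXlaw : ∀ i, μ.map (X i) = P)
    (hXindep : ProbabilityTheory.iIndepFun X μ)
    (c₀ q p : ℝ) (hc₀ : 0 < c₀) (hq0 : 0 < q) (hq1 : q < 1) (hp : 1 ≤ p)
    (hmoment : ∀ k : ℕ, 1 ≤ k →
      ∫⁻ ω, transportCost p
          (∑ i ∈ Finset.range k, ((k : ℝ≥0∞))⁻¹ • Measure.dirac (X i ω)) P ∂μ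
        ≤ ENNReal.ofReal (c₀ * (k : ℝ) ^ (-q)))
    (N : ℕ) (hN : 1 ≤ N) (w : ℕ → ℝ)
    (hw_nn : ∀ i, 0 ≤ w i)
    (hw_mono : ∀ i, i + 1 < N → w (i + 1) ≤ w i)
    (hw_sum : ∑ i ∈ Finset.range N, w i = 1) :
    ∫⁻ ω, transportCost p
        (∑ i ∈ Finset.range N, ENNReal.ofReal (w i) • Measure.dirac (X i ω)) P ∂μ
      ≤ ENNReal.ofReal (c₀ * ∑ i ∈ Finset.range N, ((i : ℝ) + 1) ^ (-q) * w i) :=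
  stmt_7_general μ P X hXmeas c₀ q p hc₀ hq0 hp hmoment N w hw_nn hw_mono hw_sum
end
end

section
/- Fix p ≥ 1, ε > 0, ρ > 0, and T ≥ 1. Every maximizer of the function w ↦ T_eff(w)·(ε − D_p(w)ρ)_+^{2p} over the probability simplex in ℝ^T, where T_eff(w) = 1/∑ w_t² and D_p(w) = (∑_t w_t (T−t+1)^p)^{1/p}, that satisfies ε > D_p(w)ρ must have the form w_t = (c_1 − c_2 (T−t+1)^p)_+ for some constants c_1, c_2 ≥ 0. -/
/-!
Move mass `s ≥ 0` from a coordinate `i` with `w i > 0` to any coordinate `j`. The slack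
`D_p(w) ρ < ε` keeps the positive part inactive near `w`, so the objective is differentiable
along this feasible direction and its derivative at `s = 0` is nonpositive. Clearing
denominators, with `a t = (T - t + 1) ^ p`, `G = (ε - D_p(w) ρ) ^ (2p) > 0` and
`β = 2 ρ (ε - D_p(w) ρ) ^ (2p - 1) D_p(w) ^ (1 - p) ≥ 0`, this says that
`2 G w t + (∑ w²) β a t` takes its minimum over `t` at every point of the support of `w`:
it is constant there and no smaller elsewhere, which is the truncated form.
-/

open Filter Finset Topology

theorem HasDerivAt.nonpos_of_isLocalMaxOn_Ici {f : ℝ → ℝ} {f' x : ℝ} (hf : HasDerivAt f f' x)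
    (hmax : IsLocalMaxOn f (Set.Ici x) x) : f' ≤ 0 := by
  have hcone : (1 : ℝ) ∈ posTangentConeAt (Set.Ici x) x :=
    mem_posTangentConeAt_of_segment_subset (by simp [segment_eq_Icc, Set.Icc_subset_Ici_self])
  simpa using hmax.hasFDerivWithinAt_nonpos hf.hasFDerivAt.hasFDerivWithinAt hcone

theorem hasDerivAt_max_sub_rpow_rpow {p ε ρ A : ℝ} (hp : p ≠ 0) (hA : 0 < A)
    (hslack : A ^ (1 / p) * ρ < ε) :
    HasDerivAt (fun A ↦ max (ε - A ^ (1 / p) * ρ) 0 ^ (2 * p))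
      (-(2 * ρ * (ε - A ^ (1 / p) * ρ) ^ (2 * p - 1) * A ^ (1 / p - 1))) A := by
  have hgap : 0 < ε - A ^ (1 / p) * ρ := sub_pos.2 hslack
  have hinner : HasDerivAt (fun A ↦ ε - A ^ (1 / p) * ρ) (-(1 / p * A ^ (1 / p - 1) * ρ)) A :=
    ((Real.hasDerivAt_rpow_const (Or.inl hA.ne')).mul_const ρ).const_sub ε
  have hpow := hinner.rpow_const (p := 2 * p) (Or.inl hgap.ne')
  have hmax : (fun A ↦ max (ε - A ^ (1 / p) * ρ) 0 ^ (2 * p)) =ᶠ[𝓝 A]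
      fun A ↦ (ε - A ^ (1 / p) * ρ) ^ (2 * p) := by
    filter_upwards [hinner.continuousAt.eventually (eventually_gt_nhds hgap)] with B hB
    rw [max_eq_left hB.le]
  refine (hpow.congr_deriv ?_).congr_of_eventuallyEq hmax
  field_simp

theorem sum_mul_single_sub_single {ι : Type*} [DecidableEq ι] {N : Finset ι} {i j : ι}
    (hi : i ∈ N) (hj : j ∈ N) (f : ι → ℝ) :
    ∑ t ∈ N, f t * (Pi.single j 1 - Pi.single i 1 : ι → ℝ) t = f j - f i := by
  simp [mul_sub, Pi.single_apply, sum_sub_distrib, hi, hj]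

theorem exchange_le_of_maximizes {ι : Type*} [DecidableEq ι] {N : Finset ι} {a w : ι → ℝ}
    {Φ : ℝ → ℝ} {Φ' : ℝ} (hΦ : HasDerivAt Φ Φ' (∑ t ∈ N, w t * a t))
    (hw_nn : ∀ t, 0 ≤ w t) (hw_sum : ∑ t ∈ N, w t = 1)
    (hw_max : ∀ v : ι → ℝ, (∀ t, 0 ≤ v t) → ∑ t ∈ N, v t = 1 →
      (∑ t ∈ N, v t ^ 2)⁻¹ * Φ (∑ t ∈ N, v t * a t) ≤
        (∑ t ∈ N, w t ^ 2)⁻¹ * Φ (∑ t ∈ N, w t * a t))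
    {i j : ι} (hi : i ∈ N) (hj : j ∈ N) (hwi : 0 < w i) :
    2 * Φ (∑ t ∈ N, w t * a t) * w i - (∑ t ∈ N, w t ^ 2) * Φ' * a i ≤
      2 * Φ (∑ t ∈ N, w t * a t) * w j - (∑ t ∈ N, w t ^ 2) * Φ' * a j := by
  set S := ∑ t ∈ N, w t ^ 2
  set A := ∑ t ∈ N, w t * a t
  set d : ι → ℝ := Pi.single j 1 - Pi.single i 1
  have hS : 0 < S := (pow_pos hwi 2).trans_le (single_le_sum (fun t _ ↦ sq_nonneg (w t)) hi)
  have hline (t : ι) : HasDerivAt (fun s : ℝ ↦ w t + s * d t) (d t) 0 := by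
    simpa using ((hasDerivAt_id (0 : ℝ)).mul_const (d t)).const_add (w t)
  have hSd : HasDerivAt (fun s ↦ ∑ t ∈ N, (w t + s * d t) ^ 2) (2 * (w j - w i)) 0 := by
    refine (HasDerivAt.fun_sum (u := N) fun t _ ↦ (hline t).pow 2).congr_deriv ?_
    rw [← sum_mul_single_sub_single hi hj, mul_sum]
    exact sum_congr rfl fun t _ ↦ by simp [d]; ring
  have hAd : HasDerivAt (fun s ↦ ∑ t ∈ N, (w t + s * d t) * a t) (a j - a i) 0 := by
    refine (HasDerivAt.fun_sum (u := N) fun t _ ↦ (hline t).mul_const (a t)).congr_deriv ?_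
    rw [← sum_mul_single_sub_single hi hj]
    exact sum_congr rfl fun t _ ↦ mul_comm _ _
  have hderiv := (hSd.inv (by simpa using hS.ne')).mul (hΦ.comp_of_eq 0 hAd (by simp [A]))
  have hloc : IsLocalMaxOn (fun s ↦ (∑ t ∈ N, (w t + s * d t) ^ 2)⁻¹ *
      (Φ ∘ fun s ↦ ∑ t ∈ N, (w t + s * d t) * a t) s) (Set.Ici 0) 0 := by
    filter_upwards [Icc_mem_nhdsGE hwi] with s ⟨hs0, hsw⟩
    have hfeas (t : ι) : 0 ≤ w t + s * d t := by
      by_cases hti : t = i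
      · subst hti; by_cases htj : t = j <;> simp [d, *]
      · have : 0 ≤ d t := by simp [d, Pi.single_apply, hti]; split_ifs <;> norm_num
        nlinarith [hw_nn t]
    have hsum : ∑ t ∈ N, (w t + s * d t) = 1 := by
      have hd : ∑ t ∈ N, d t = 0 := by
        simpa only [one_mul, sub_self] using sum_mul_single_sub_single hi hj fun _ ↦ 1
      rw [sum_add_distrib, ← mul_sum, hd, hw_sum, mul_zero, add_zero]
    simpa using hw_max _ hfeas hsum
  have hnonpos : -(2 * (w j - w i)) / S ^ 2 * Φ A + S⁻¹ * (Φ' * (a j - a i)) ≤ 0 := by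
    simpa using hderiv.nonpos_of_isLocalMaxOn_Ici hloc
  have hscaled : S ^ 2 * (-(2 * (w j - w i)) / S ^ 2 * Φ A + S⁻¹ * (Φ' * (a j - a i))) =
      (2 * Φ A * w i - S * Φ' * a i) - (2 * Φ A * w j - S * Φ' * a j) := by
    field_simp
    ring
  linarith [mul_nonpos_of_nonneg_of_nonpos (sq_nonneg S) hnonpos]

theorem exists_eq_max_sub_of_exchange {ι : Type*} {N : Finset ι} {a w : ι → ℝ} {l m : ℝ}
    (hl : 0 < l) (hm : 0 ≤ m) (ha : ∀ t ∈ N, 0 ≤ a t) (hw_nn : ∀ t, 0 ≤ w t)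
    {i₀ : ι} (hi₀ : i₀ ∈ N) (hwi₀ : 0 < w i₀)
    (hex : ∀ i ∈ N, 0 < w i → ∀ j ∈ N, l * w i + m * a i ≤ l * w j + m * a j) :
    ∃ c₁ : ℝ, 0 ≤ c₁ ∧ ∀ t ∈ N, w t = max (c₁ - m / l * a t) 0 := by
  refine ⟨(l * w i₀ + m * a i₀) / l, by have := ha i₀ hi₀; positivity, fun t ht ↦ ?_⟩
  have hlevel : l * w i₀ + m * a i₀ ≤ l * w t + m * a t := hex i₀ hi₀ hwi₀ t ht
  have hval : (l * w i₀ + m * a i₀) / l - m / l * a t =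
      w t - (l * w t + m * a t - (l * w i₀ + m * a i₀)) / l := by
    field_simp
    ring
  rcases (hw_nn t).eq_or_lt with hzero | hpos
  · rw [max_eq_right (by linarith [hval, div_nonneg (sub_nonneg.2 hlevel) hl.le]), hzero]
  · have := hex t ht hpos i₀ hi₀
    rw [hval, show l * w t + m * a t - (l * w i₀ + m * a i₀) = 0 by linarith, zero_div, sub_zero,
      max_eq_left hpos.le]

theorem stmt_14_general (T : ℕ) (p ε ρ : ℝ) (hp : 1 ≤ p) (hρ : 0 < ρ)
    (F : (ℕ → ℝ) → ℝ)
    (hF : ∀ v, F v = (∑ t ∈ Finset.Icc 1 T, (v t) ^ 2)⁻¹ *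
      (max (ε - (∑ t ∈ Finset.Icc 1 T, v t * ((T : ℝ) - (t : ℝ) + 1) ^ p) ^ (1/p) * ρ) 0)
        ^ (2 * p))
    (w : ℕ → ℝ)
    (hw_nn : ∀ t, 0 ≤ w t) (hw_sum : ∑ t ∈ Finset.Icc 1 T, w t = 1)
    (hw_max : ∀ v : ℕ → ℝ, (∀ t, 0 ≤ v t) → (∑ t ∈ Finset.Icc 1 T, v t = 1) → F v ≤ F w)
    (hslack : (∑ t ∈ Finset.Icc 1 T, w t * ((T : ℝ) - (t : ℝ) + 1) ^ p) ^ (1/p) * ρ < ε) :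
    ∃ c₁ c₂ : ℝ, 0 ≤ c₁ ∧ 0 ≤ c₂ ∧
      ∀ t ∈ Finset.Icc 1 T, w t = max (c₁ - c₂ * ((T : ℝ) - (t : ℝ) + 1) ^ p) 0 := by
  set a : ℕ → ℝ := fun t ↦ ((T : ℝ) - t + 1) ^ p
  set S := ∑ t ∈ Icc 1 T, w t ^ 2
  set A := ∑ t ∈ Icc 1 T, w t * a t
  have ha (t : ℕ) (ht : t ∈ Icc 1 T) : 0 < a t := by
    have : (t : ℝ) ≤ T := Nat.cast_le.2 (mem_Icc.1 ht).2
    exact Real.rpow_pos_of_pos (by linarith) p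
  obtain ⟨i₀, hi₀, hwi₀⟩ : ∃ i ∈ Icc 1 T, 0 < w i :=
    exists_lt_of_sum_lt (by simp [hw_sum] : ∑ t ∈ Icc 1 T, (0 : ℝ) < ∑ t ∈ Icc 1 T, w t)
  have hA : 0 < A := sum_pos' (fun t ht ↦ mul_nonneg (hw_nn t) (ha t ht).le)
    ⟨i₀, hi₀, mul_pos hwi₀ (ha i₀ hi₀)⟩
  have hgap : 0 < ε - A ^ (1 / p) * ρ := sub_pos.2 hslack
  have hex := fun i hi hwi j hj ↦ exchange_le_of_maximizes
    (hasDerivAt_max_sub_rpow_rpow (by linarith : p ≠ 0) hA hslack) hw_nn hw_sum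
    (fun v hv hv₁ ↦ by simpa only [hF] using hw_max v hv hv₁) (i := i) (j := j) hi hj hwi
  set G := (ε - A ^ (1 / p) * ρ) ^ (2 * p)
  set β := 2 * ρ * (ε - A ^ (1 / p) * ρ) ^ (2 * p - 1) * A ^ (1 / p - 1)
  have hG : 0 < G := Real.rpow_pos_of_pos hgap _
  have hβ : 0 ≤ β := by
    have := Real.rpow_pos_of_pos hgap (2 * p - 1)
    have := Real.rpow_pos_of_pos hA (1 / p - 1)
    positivity
  have hS : 0 ≤ S := sum_nonneg fun t _ ↦ sq_nonneg (w t)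
  obtain ⟨c₁, hc₁, hw⟩ := exists_eq_max_sub_of_exchange (l := 2 * G) (m := S * β)
    (by positivity) (by positivity) (fun t ht ↦ (ha t ht).le) hw_nn hi₀ hwi₀ fun i hi hwi j hj ↦ by
      have := hex i hi hwi j hj
      rw [max_eq_left hgap.le] at this
      linarith
  exact ⟨c₁, S * β / (2 * G), hc₁, by positivity, hw⟩

/-- Structure of optimal weights: any maximizer `w` of
`T_eff(w)·(ε - D_p(w)ρ)_+^(2p)` over the probability simplex in `ℝ^T` at which
`ε > D_p(w)ρ` has the truncated-polynomial form
`w_t = (c_1 - c_2 (T - t + 1)^p)_+` for some constants `c_1, c_2 ≥ 0`. -/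
theorem stmt_14 (T : ℕ) (hT : 1 ≤ T) (p ε ρ : ℝ) (hp : 1 ≤ p) (hε : 0 < ε) (hρ : 0 < ρ)
    (F : (ℕ → ℝ) → ℝ)
    (hF : ∀ v, F v = (∑ t ∈ Finset.Icc 1 T, (v t) ^ 2)⁻¹ *
      (max (ε - (∑ t ∈ Finset.Icc 1 T, v t * ((T : ℝ) - (t : ℝ) + 1) ^ p) ^ (1/p) * ρ) 0)
        ^ (2 * p))
    (w : ℕ → ℝ)
    (hw_nn : ∀ t, 0 ≤ w t) (hw_sum : ∑ t ∈ Finset.Icc 1 T, w t = 1)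
    (hw_max : ∀ v : ℕ → ℝ, (∀ t, 0 ≤ v t) → (∑ t ∈ Finset.Icc 1 T, v t = 1) → F v ≤ F w)
    (hslack : (∑ t ∈ Finset.Icc 1 T, w t * ((T : ℝ) - (t : ℝ) + 1) ^ p) ^ (1/p) * ρ < ε) :
    ∃ c₁ c₂ : ℝ, 0 ≤ c₁ ∧ 0 ≤ c₂ ∧
      ∀ t ∈ Finset.Icc 1 T, w t = max (c₁ - c₂ * ((T : ℝ) - (t : ℝ) + 1) ^ p) 0 :=
  stmt_14_general T p ε ρ hp hρ F hF w hw_nn hw_sum hw_max hslack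
end

section
/- Fix ε, ρ > 0 with ε/ρ > 1. The function h(α) = (2/α − 1)(ε − ρ/α)² over α ∈ (ρ/ε, 1] attains its maximum at α = min{3/(ε/ρ + 1), 1} (equivalently, at the projection of 3/(ε/ρ+1) onto [ρ/ε, 1]). -/
/-!
In the variable `β = 1/α` the objective is the cubic `g β = (2β - 1)(ε - ρβ)²`, whose derivative
`2(ε - ρβ)(ε + ρ - 3ρβ)` vanishes at `β* = (ε/ρ + 1)/3` and at the root `β = ε/ρ`. So `g` increases
up to `β*` and decreases from `β*` to `ε/ρ`; on `[1, ε/ρ)` the maximum sits at `β*` when `β* ≥ 1`,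
and at `β = 1` otherwise.
-/

namespace ExpSmoothing

/-- The concentration objective in the reciprocal decay rate `β = 1/α`. -/
def objectiveInv (ε ρ β : ℝ) : ℝ := (2 * β - 1) * (ε - ρ * β) ^ 2

lemma objectiveInv_le_critical {ε ρ β : ℝ} (hρ : 0 < ρ) (hρε : ρ ≤ 2 * ε) (hβ : ρ * β ≤ ε) :
    objectiveInv ε ρ β ≤ objectiveInv ε ρ ((ε / ρ + 1) / 3) := by
  have hβ₀ : ε = 3 * ρ * ((ε / ρ + 1) / 3) - ρ := by field_simp; ring
  generalize (ε / ρ + 1) / 3 = β₀ at hβ₀ ⊢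
  -- Taylor expansion of the cubic at its critical point `β₀`.
  have htaylor : objectiveInv ε ρ β₀ - objectiveInv ε ρ β
      = ρ / 3 * (β - β₀) ^ 2 * (8 * ε - ρ - 6 * ρ * β) := by
    simp only [objectiveInv]; rw [hβ₀]; ring
  have hfactor : 0 ≤ ρ / 3 * (β - β₀) ^ 2 * (8 * ε - ρ - 6 * ρ * β) := by
    have : 0 ≤ 8 * ε - ρ - 6 * ρ * β := by linarith
    positivity
  linarith

lemma objectiveInv_le_one {ε ρ β : ℝ} (hρ : 0 < ρ) (hε : ε ≤ 2 * ρ) (hβ1 : 1 ≤ β)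
    (hβ : ρ * β ≤ ε) :
    objectiveInv ε ρ β ≤ objectiveInv ε ρ 1 := by
  set u := β - 1
  set d := ε - ρ
  have hu : 0 ≤ u := by simp only [u]; linarith
  have hρu : ρ * u ≤ d := by simp only [u, d]; linarith
  have hdiff : objectiveInv ε ρ β - objectiveInv ε ρ 1
      = u * (2 * d * (d - ρ) + ρ * u * (ρ - 4 * d + 2 * ρ * u)) := by
    simp only [objectiveInv, u, d]; ring
  have hd : 0 ≤ d := (mul_nonneg hρ.le hu).trans hρu
  have hquad : 2 * d * (d - ρ) + ρ * u * (ρ - 4 * d + 2 * ρ * u) ≤ 0 := by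
    have hsplit : 2 * d * (d - ρ) + ρ * u * (ρ - 4 * d + 2 * ρ * u)
        = 2 * d * (d - ρ) + ρ * u * (ρ - 2 * d) + 2 * (ρ * u) * (ρ * u - d) := by ring
    have hlast : 2 * (ρ * u) * (ρ * u - d) ≤ 0 :=
      mul_nonpos_of_nonneg_of_nonpos (by positivity) (by linarith)
    rcases le_total ρ (2 * d) with hρd | hdρ
    · linarith [mul_nonpos_of_nonneg_of_nonpos hd (by linarith : d - ρ ≤ 0),
        mul_nonpos_of_nonneg_of_nonpos (by positivity : 0 ≤ ρ * u) (by linarith : ρ - 2 * d ≤ 0)]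
    · linarith [mul_le_mul_of_nonneg_right hρu (by linarith : 0 ≤ ρ - 2 * d), mul_nonneg hd hρ.le]
  linarith [mul_nonpos_of_nonneg_of_nonpos hu hquad]

end ExpSmoothing

open ExpSmoothing in
/-- The limiting exponential-smoothing objective `h(α) = (2/α - 1)(ε - ρ/α)²` over
`α ∈ (ρ/ε, 1]` attains its maximum at `α = min {3/(ε/ρ + 1), 1}`. -/
theorem stmt_19 (ε ρ : ℝ) (hε : 0 < ε) (hρ : 0 < ρ) (hratio : 1 < ε / ρ)
    (h : ℝ → ℝ) (hh : ∀ α, h α = (2 / α - 1) * (ε - ρ / α) ^ 2) :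
    ∀ α, ρ / ε < α → α ≤ 1 → h α ≤ h (min (3 / (ε / ρ + 1)) 1) := by
  intro α hα hα1
  have h_eq : ∀ α, h α = objectiveInv ε ρ α⁻¹ := fun α => by
    rw [hh, objectiveInv, div_eq_mul_inv, div_eq_mul_inv]
  have hρε : ρ < ε := by rwa [one_lt_div hρ] at hratio
  have hα0 : 0 < α := (div_pos hρ hε).trans hα
  have hβ1 : 1 ≤ α⁻¹ := one_le_inv₀ hα0 |>.2 hα1
  have hβ : ρ * α⁻¹ ≤ ε := by
    rw [← div_eq_mul_inv, div_le_iff₀ hα0]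
    exact ((div_lt_iff₀' hε).1 hα).le
  rw [h_eq, h_eq]
  rcases le_total (3 / (ε / ρ + 1)) 1 with hc | hc
  · rw [min_eq_left hc, inv_div]
    exact objectiveInv_le_critical hρ (by linarith) hβ
  · rw [min_eq_right hc, inv_one]
    have : ε / ρ ≤ 2 := by
      rw [one_le_div (by positivity)] at hc; linarith
    exact objectiveInv_le_one hρ ((div_le_iff₀ hρ).1 this) hβ1 hβ
end
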